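/- For λ, μ natural numbers with λ ≤ μ, j ∈ {0,…,λ}, and ν = λ+μ−2j, the element f = A_λ/t² + A_μ/s² + (A_ν − A_λ − A_μ)/(ts) ∈ K₂ (where s = t−a) has t-expansion E_t(f) ∈ Q((t)) of the form A_λt⁻² + (lower order pole ≤ 1), and the equation ÿ = fy admits a solution of the form y = t^{−λ/2}s^{−μ/2}φ(t) with φ(t) = (−a)^{μ/2}·Σ_{n=0}^{j} ((−j)ₙ(j−λ−μ−1)ₙ/(−λ)ₙ)·tⁿa⁻ⁿ/n!, equivalently φ satisfies t(t−a)φ'' − ((λ+μ)t − aλ)φ' + (A_{λ+μ} − A_ν)φ = 0. -/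

import Mathlib

noncomputable section

open Polynomial

/-- `A_ν = ν²/4 + ν/2`. -/
def Aval (ν : ℤ) : ℚ := (ν : ℚ) ^ 2 / 4 + (ν : ℚ) / 2

/-- The Pochhammer value `(x)ₙ`. -/
def poch (x : ℚ) (n : ℕ) : ℚ := (ascPochhammer ℚ n).eval x

/-- `Q = ℂ((a))`. -/
abbrev QQ : Type := LaurentSeries ℂ

/-- The variable `a ∈ Q`. -/
def aa : QQ := HahnSeries.single 1 1

/-- `Q((t))`, the receptacle of the `t`-expansion. -/
abbrev FF : Type := LaurentSeries QQ

/-- The variable `t`. -/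
def TT : FF := HahnSeries.single 1 1

/-- `s = t − a`. -/
def SS : FF := TT - HahnSeries.C aa

/- ### Auxiliary lemmas -/

lemma aa_ne : aa ≠ 0 := HahnSeries.single_ne_zero one_ne_zero

lemma poch_succ (x : ℚ) (n : ℕ) : poch x (n+1) = poch x n * (x + n) :=
  ascPochhammer_succ_eval n x

lemma poch_ne (lam n : ℕ) (hn : n ≤ lam) : poch (-(lam:ℚ)) n ≠ 0 := by
  induction n with
  | zero => simp [poch]
  | succ k ih =>
    rw [poch_succ]
    refine mul_ne_zero (ih (by omega)) ?_
    have h1 : (k:ℚ) < (lam:ℚ) := by exact_mod_cast (by omega : k < lam)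
    intro h; nlinarith

/-- ℚ-level recurrence for the truncated hypergeometric coefficients. -/
lemma rat_rec (lam mu j m : ℕ) (hj : j ≤ lam) (hm : m < j) :
    ((m:ℚ)*((m:ℚ)-1) - ((lam:ℚ)+(mu:ℚ))*(m:ℚ)
        + (Aval ((lam:ℤ)+(mu:ℤ)) - Aval ((lam:ℤ)+(mu:ℤ)-2*(j:ℤ))))
      * (poch (-(j:ℚ)) m * poch ((j:ℚ)-(lam:ℚ)-(mu:ℚ)-1) m / poch (-(lam:ℚ)) m
          / (m.factorial : ℚ))
    + ((m:ℚ)+1)*((lam:ℚ)-(m:ℚ))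
      * (poch (-(j:ℚ)) (m+1) * poch ((j:ℚ)-(lam:ℚ)-(mu:ℚ)-1) (m+1) / poch (-(lam:ℚ)) (m+1)
          / ((m+1).factorial : ℚ)) = 0 := by
  have hD : poch (-(lam:ℚ)) m ≠ 0 := poch_ne lam m (by omega)
  have hg : (-(lam:ℚ) + m) ≠ 0 := by
    have : (m:ℚ) < (lam:ℚ) := by exact_mod_cast (by omega : m < lam)
    intro h; nlinarith
  have hF : (m.factorial : ℚ) ≠ 0 := Nat.cast_ne_zero.mpr m.factorial_ne_zero
  rw [poch_succ, poch_succ, poch_succ, Nat.factorial_succ, Aval, Aval]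
  push_cast
  field_simp
  ring

/-- ℚ-level vanishing at `m = j`. -/
lemma rat_top (lam mu j : ℕ) :
    (j:ℚ)*((j:ℚ)-1) - ((lam:ℚ)+(mu:ℚ))*(j:ℚ)
        + (Aval ((lam:ℤ)+(mu:ℤ)) - Aval ((lam:ℤ)+(mu:ℤ)-2*(j:ℤ))) = 0 := by
  rw [Aval, Aval]; push_cast; ring

/-- Generic ODE lemma for truncated series with the right coefficient recurrence. -/
lemma Lzero {K : Type*} [Field K] (A lamK Lam Kc : K) (j : ℕ) (b : ℕ → K)
    (hb : ∀ m : ℕ, j < m → b m = 0)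
    (hrec : ∀ m : ℕ,
      b m * ((m : K) * ((m : K) - 1) - Lam * (m : K) + Kc)
        + A * ((m : K) + 1) * (lamK - (m : K)) * b (m + 1) = 0) :
    X * (X - C A) * derivative (derivative (∑ n ∈ Finset.range (j + 1), C (b n) * X ^ n))
      - (C Lam * X - C (A * lamK)) * derivative (∑ n ∈ Finset.range (j + 1), C (b n) * X ^ n)
      + C Kc * (∑ n ∈ Finset.range (j + 1), C (b n) * X ^ n) = 0 := by
  set ψ : K[X] := ∑ n ∈ Finset.range (j + 1), C (b n) * X ^ n with hψ
  have hc : ∀ n : ℕ, ψ.coeff n = b n := by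
    intro n
    rw [hψ, finset_sum_coeff]
    simp only [coeff_C_mul, coeff_X_pow, mul_ite, mul_one, mul_zero]
    rw [Finset.sum_ite_eq (Finset.range (j+1)) n b]
    by_cases h : n ∈ Finset.range (j+1)
    · rw [if_pos h]
    · rw [if_neg h]
      exact (hb n (by simpa using h)).symm
  have hd1 : ∀ n : ℕ, (derivative ψ).coeff n = b (n+1) * ((n:K)+1) := by
    intro n; rw [coeff_derivative, hc]
  have hd2 : ∀ n : ℕ, (derivative (derivative ψ)).coeff n = b (n+2) * ((n:K)+2) * ((n:K)+1) := by
    intro n; rw [coeff_derivative, hd1]; push_cast; ring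
  have key : X * (X - C A) * derivative (derivative ψ)
      - (C Lam * X - C (A * lamK)) * derivative ψ + C Kc * ψ
      = derivative (derivative ψ) * X ^ 2 - C A * (derivative (derivative ψ) * X ^ 1)
        - C Lam * (derivative ψ * X ^ 1) + C (A * lamK) * derivative ψ + C Kc * ψ := by
    ring
  rw [key]
  ext m
  simp only [coeff_add, coeff_sub, coeff_C_mul, coeff_mul_X_pow', coeff_zero]
  match m with
  | 0 =>
    have h := hrec 0
    simp only [show ¬ (2 ≤ 0) by omega, show ¬ (1 ≤ 0) by omega, if_neg, if_false,
      hd1, hc]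
    push_cast at h ⊢
    linear_combination h
  | 1 =>
    have h := hrec 1
    simp only [show ¬ (2 ≤ 1) by omega, show (1:ℕ) ≤ 1 by omega, if_true, if_false,
      Nat.sub_self, hd1, hd2, hc]
    push_cast at h ⊢
    linear_combination h
  | (k+2) =>
    have h := hrec (k+2)
    simp only [show 2 ≤ k+2 by omega, show 1 ≤ k+2 by omega, if_true,
      Nat.add_sub_cancel, show k+2-1 = k+1 by omega, hd1, hd2, hc]
    push_cast at h ⊢
    linear_combination h

lemma my_inv_eq {K : Type*} [Field K] {x y : K} (h : x * y = 1) : x⁻¹ = y := by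
  have hx : x ≠ 0 := left_ne_zero_of_mul_eq_one h
  calc x⁻¹ = x⁻¹ * (x * y) := by rw [h, mul_one]
  _ = y := by rw [← mul_assoc, inv_mul_cancel₀ hx, one_mul]

lemma my_zpow2 {K : Type*} [Field K] {x y : K} (h : x * y = 1) : x ^ (-2 : ℤ) = y ^ 2 := by
  rw [show (-2 : ℤ) = -(2:ℕ) by norm_num, zpow_neg, zpow_natCast, ← inv_pow, my_inv_eq h]

lemma ofPS_coeff_neg (p : PowerSeries QQ) {n : ℤ} (hn : n < 0) :
    ((HahnSeries.ofPowerSeries ℤ QQ p).coeff n) = 0 := by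
  rw [HahnSeries.ofPowerSeries_apply]
  apply HahnSeries.embDomain_notin_range
  rintro ⟨m, hm⟩
  have hm' : (m:ℤ) = n := hm
  omega

def Pinv : PowerSeries QQ := (PowerSeries.X - PowerSeries.C aa)⁻¹

lemma SS_eq : SS = HahnSeries.ofPowerSeries ℤ QQ (PowerSeries.X - PowerSeries.C aa) := by
  rw [map_sub, HahnSeries.ofPowerSeries_X, HahnSeries.ofPowerSeries_C]; rfl

lemma constCoeff_ne : PowerSeries.constantCoeff (PowerSeries.X - PowerSeries.C aa) ≠ 0 := by
  simp [aa_ne]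

lemma e_TT : TT * (HahnSeries.single (-1:ℤ) (1:QQ)) = 1 := by
  have h := HahnSeries.single_mul_single (a := (1:ℤ)) (b := (-1:ℤ)) (r := (1:QQ)) (s := (1:QQ))
  rw [show (1:ℤ) + -1 = 0 by norm_num, mul_one] at h
  exact h.trans HahnSeries.single_zero_one

lemma e_sq : (HahnSeries.single (-1:ℤ) (1:QQ) : FF) ^ 2 = HahnSeries.single (-2:ℤ) (1:QQ) := by
  have h := HahnSeries.single_pow (R := QQ) (-1:ℤ) 2 (1:QQ)
  rw [show ((2:ℕ) • (-1:ℤ)) = -2 by norm_num, one_pow] at h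
  exact h

lemma e_SS : SS * HahnSeries.ofPowerSeries ℤ QQ Pinv = 1 := by
  have h : HahnSeries.ofPowerSeries ℤ QQ ((PowerSeries.X - PowerSeries.C aa) * Pinv) = 1 := by
    rw [Pinv, PowerSeries.mul_inv_cancel _ constCoeff_ne, map_one]
  rw [SS_eq]
  exact (map_mul _ _ _).symm.trans h

lemma hTT2 : TT ^ (-2:ℤ) = HahnSeries.single (-2:ℤ) (1:QQ) :=
  (my_zpow2 (K := FF) e_TT).trans e_sq

lemma hSS2 : SS ^ (-2:ℤ) = HahnSeries.ofPowerSeries ℤ QQ (Pinv ^ 2) :=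
  (my_zpow2 (K := FF) e_SS).trans (map_pow _ _ 2).symm

instance : CharZero QQ := by
  constructor
  intro a b h
  have h2 : (HahnSeries.C (a:ℂ) : QQ) = HahnSeries.C (b:ℂ) := by
    simpa [map_natCast] using h
  exact Nat.cast_injective (R := ℂ) (HahnSeries.C_injective h2)

set_option maxHeartbeats 1000000 in
lemma e_TS : (TT * SS) * (HahnSeries.single (-1:ℤ) (1:QQ) * HahnSeries.ofPowerSeries ℤ QQ Pinv)
    = 1 := by
  have h1 : (TT * SS) * (HahnSeries.single (-1:ℤ) (1:QQ) * HahnSeries.ofPowerSeries ℤ QQ Pinv)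
      = (TT * HahnSeries.single (-1:ℤ) (1:QQ)) * (SS * HahnSeries.ofPowerSeries ℤ QQ Pinv) := by
    ring
  rw [h1, e_TT, e_SS]
  exact one_mul (1 : FF)

set_option maxHeartbeats 1000000 in
lemma hTS : (TT * SS)⁻¹
    = HahnSeries.single (-1:ℤ) (1:QQ) * HahnSeries.ofPowerSeries ℤ QQ Pinv :=
  my_inv_eq e_TS

lemma myCastEq (q : ℚ) : (q : QQ) = Rat.castHom QQ q := rfl

lemma coeff_add' (x y : FF) (n : ℤ) : (x + y).coeff n = x.coeff n + y.coeff n :=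
  HahnSeries.coeff_add

lemma coeff_Cmul (r : QQ) (w : FF) (n : ℤ) : (HahnSeries.C r * w).coeff n = r * w.coeff n := by
  have h := HahnSeries.coeff_single_mul_add (r := r) (x := w) (a := n) (b := (0:ℤ))
  simpa [HahnSeries.C_apply] using h

lemma coeff_sing_mul (w : FF) (n : ℤ) :
    ((HahnSeries.single (-1:ℤ) (1:QQ)) * w).coeff n = w.coeff (n+1) := by
  have h := HahnSeries.coeff_single_mul_add (r := (1:QQ)) (x := w) (a := n+1) (b := (-1:ℤ))
  simpa using h

set_option maxHeartbeats 4000000 in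
/-- for `λ ≤ μ`, `j ≤ λ`, `ν = λ+μ−2j`, the element
`f = A_λ/t² + A_μ/s² + (A_ν−A_λ−A_μ)/(ts)` has `t`-expansion with leading term
`A_λ t⁻²` and pole of order `≤ 1` beyond it, and the (rescaled) truncated
hypergeometric series `φ = c·Σ_{n=0}^{j} ((−j)ₙ(j−λ−μ−1)ₙ/(−λ)ₙ) tⁿ a⁻ⁿ/n!`
satisfies `t(t−a)φ″ − ((λ+μ)t − aλ)φ′ + (A_{λ+μ} − A_ν)φ = 0`. -/
theorem stmt18 (lam mu j : ℕ) (hlm : lam ≤ mu) (hj : j ≤ lam)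
    (ν : ℤ) (hν : ν = (lam : ℤ) + mu - 2 * j)
    (f : FF)
    (hf : f = HahnSeries.C ((Aval lam : ℚ) : QQ) * TT ^ (-2 : ℤ)
        + HahnSeries.C ((Aval mu : ℚ) : QQ) * SS ^ (-2 : ℤ)
        + HahnSeries.C ((Aval ν - Aval lam - Aval mu : ℚ) : QQ) * (TT * SS)⁻¹) :
    ((∀ n : ℤ, n < -2 → f.coeff n = 0) ∧ f.coeff (-2) = ((Aval lam : ℚ) : QQ)) ∧
    (∀ n : ℕ, n ≤ j → poch (-(lam : ℚ)) n ≠ 0) ∧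
    (∀ c : QQ, ∀ φ : Polynomial QQ,
      φ = Polynomial.C c * ∑ n ∈ Finset.range (j + 1),
          Polynomial.C
            (((poch (-(j : ℚ)) n * poch ((j : ℚ) - lam - mu - 1) n / poch (-(lam : ℚ)) n
                / (n.factorial : ℚ) : ℚ) : QQ) * aa ^ (-(n : ℤ))) * Polynomial.X ^ n →
      Polynomial.X * (Polynomial.X - Polynomial.C aa) * derivative (derivative φ)
        - (Polynomial.C ((((lam : ℚ) + mu : ℚ)) : QQ) * Polynomial.X
            - Polynomial.C (aa * ((lam : ℚ) : QQ))) * derivative φ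
        + Polynomial.C ((Aval ((lam : ℤ) + mu) - Aval ν : ℚ) : QQ) * φ = 0) := by
  subst hν
  subst hf
  refine ⟨⟨?_, ?_⟩, ?_, ?_⟩
  · intro n hn
    rw [hTT2, hSS2, hTS, coeff_add', coeff_add', coeff_Cmul, coeff_Cmul, coeff_Cmul,
      coeff_sing_mul, HahnSeries.coeff_single, if_neg (by omega),
      ofPS_coeff_neg _ (by omega : n < 0), ofPS_coeff_neg _ (by omega : n + 1 < 0)]
    simp
  · rw [hTT2, hSS2, hTS, coeff_add', coeff_add', coeff_Cmul, coeff_Cmul, coeff_Cmul,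
      coeff_sing_mul, HahnSeries.coeff_single, if_pos rfl,
      ofPS_coeff_neg _ (by omega : (-2:ℤ) < 0), ofPS_coeff_neg _ (by omega : (-2:ℤ) + 1 < 0)]
    simp
  · intro n hn
    exact poch_ne lam n (le_trans hn hj)
  · intro c φ hφ
    subst hφ
    -- abbreviations
    set rq : ℕ → ℚ := fun n =>
      poch (-(j : ℚ)) n * poch ((j : ℚ) - lam - mu - 1) n / poch (-(lam : ℚ)) n
        / (n.factorial : ℚ) with hrq
    set b : ℕ → QQ := fun n =>
      if n ≤ j then ((rq n : ℚ) : QQ) * aa ^ (-(n : ℤ)) else 0 with hbdef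
    have haan : ∀ n : ℕ, (aa : QQ) ^ (-(n:ℤ)) = (aa⁻¹) ^ n := by
      intro n; rw [zpow_neg, zpow_natCast, inv_pow]
    have hb : ∀ m : ℕ, j < m → b m = 0 := by
      intro m hm; simp only [hbdef]; rw [if_neg (by omega)]
    have hvaa : aa * aa⁻¹ = 1 := mul_inv_cancel₀ aa_ne
    have Hq : ∀ m : ℕ, m < j →
        ((m:QQ)*((m:QQ)-1) - ((lam:QQ)+(mu:QQ))*(m:QQ)
            + (Rat.castHom QQ (Aval ((lam:ℤ)+(mu:ℤ)))
                - Rat.castHom QQ (Aval ((lam:ℤ)+(mu:ℤ)-2*(j:ℤ)))))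
          * Rat.castHom QQ (rq m)
        + ((m:QQ)+1)*((lam:QQ)-(m:QQ)) * Rat.castHom QQ (rq (m+1)) = 0 := by
      intro m hm
      have H2 := congrArg (fun q : ℚ => (q : QQ)) (rat_rec lam mu j m hj hm)
      simp only [myCastEq, map_add, map_sub, map_mul, map_div₀, map_one, map_natCast,
        map_zero] at H2
      simp only [hrq]
      simp only [map_div₀, map_mul, map_natCast]
      linear_combination H2
    have Hqtop :
        ((j:QQ)*((j:QQ)-1) - ((lam:QQ)+(mu:QQ))*(j:QQ)
            + (Rat.castHom QQ (Aval ((lam:ℤ)+(mu:ℤ)))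
                - Rat.castHom QQ (Aval ((lam:ℤ)+(mu:ℤ)-2*(j:ℤ))))) = 0 := by
      have H2 := congrArg (fun q : ℚ => (q : QQ)) (rat_top lam mu j)
      simp only [myCastEq, map_add, map_sub, map_mul, map_one, map_natCast, map_zero] at H2
      linear_combination H2
    have hrec : ∀ m : ℕ,
        b m * ((m : QQ) * ((m : QQ) - 1) - (((lam : ℚ) + mu : ℚ) : QQ) * (m : QQ)
            + ((Aval ((lam : ℤ) + mu) - Aval ((lam : ℤ) + mu - 2 * j) : ℚ) : QQ))
          + aa * ((m : QQ) + 1) * (((lam : ℚ) : QQ) - (m : QQ)) * b (m + 1) = 0 := by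
      intro m
      rcases lt_trichotomy m j with hm | hm | hm
      · simp only [hbdef]
        rw [if_pos (by omega), if_pos (by omega), haan m, haan (m+1)]
        simp only [myCastEq, map_add, map_sub, map_natCast]
        linear_combination (aa⁻¹ ^ m) * Hq m hm
          + (((m:QQ) + 1) * ((lam:QQ) - (m:QQ))
              * Rat.castHom QQ (rq (m+1)) * aa⁻¹ ^ m) * hvaa
      · subst hm
        simp only [hbdef]
        rw [if_pos le_rfl, if_neg (by omega), haan m]
        simp only [myCastEq, map_add, map_sub, map_natCast]
        linear_combination (Rat.castHom QQ (rq m) * aa⁻¹ ^ m) * Hqtop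
      · simp only [hbdef]
        rw [if_neg (by omega), if_neg (by omega)]
        simp
    have hsum : (∑ n ∈ Finset.range (j + 1),
        Polynomial.C
          (((poch (-(j : ℚ)) n * poch ((j : ℚ) - lam - mu - 1) n / poch (-(lam : ℚ)) n
              / (n.factorial : ℚ) : ℚ) : QQ) * aa ^ (-(n : ℤ))) * Polynomial.X ^ n)
        = ∑ n ∈ Finset.range (j + 1), Polynomial.C (b n) * Polynomial.X ^ n := by
      refine Finset.sum_congr rfl (fun n hn => ?_)
      have hn' : n ≤ j := by simpa [Nat.lt_succ_iff] using hn
      simp only [hbdef, hrq]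
      rw [if_pos hn']
    rw [hsum]
    have hD1 : derivative (Polynomial.C c * ∑ n ∈ Finset.range (j + 1),
        Polynomial.C (b n) * Polynomial.X ^ n)
        = Polynomial.C c * derivative (∑ n ∈ Finset.range (j + 1),
            Polynomial.C (b n) * Polynomial.X ^ n) := derivative_C_mul _ _
    have hD2 : derivative (Polynomial.C c * derivative (∑ n ∈ Finset.range (j + 1),
        Polynomial.C (b n) * Polynomial.X ^ n))
        = Polynomial.C c * derivative (derivative (∑ n ∈ Finset.range (j + 1),
            Polynomial.C (b n) * Polynomial.X ^ n)) := derivative_C_mul _ _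
    rw [hD1, hD2]
    have key := Lzero (K := QQ) aa (((lam : ℚ) : QQ)) ((((lam : ℚ) + mu : ℚ)) : QQ)
      (((Aval ((lam : ℤ) + mu) - Aval ((lam : ℤ) + mu - 2 * j) : ℚ) : QQ)) j b hb hrec
    calc Polynomial.X * (Polynomial.X - Polynomial.C aa)
          * (Polynomial.C c * derivative (derivative (∑ n ∈ Finset.range (j + 1),
              Polynomial.C (b n) * Polynomial.X ^ n)))
        - (Polynomial.C ((((lam : ℚ) + mu : ℚ)) : QQ) * Polynomial.X
            - Polynomial.C (aa * ((lam : ℚ) : QQ)))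
          * (Polynomial.C c * derivative (∑ n ∈ Finset.range (j + 1),
              Polynomial.C (b n) * Polynomial.X ^ n))
        + Polynomial.C ((Aval ((lam : ℤ) + mu) - Aval ((lam : ℤ) + mu - 2 * j) : ℚ) : QQ)
          * (Polynomial.C c * ∑ n ∈ Finset.range (j + 1),
              Polynomial.C (b n) * Polynomial.X ^ n)
        = Polynomial.C c * (Polynomial.X * (Polynomial.X - Polynomial.C aa)
            * derivative (derivative (∑ n ∈ Finset.range (j + 1),
                Polynomial.C (b n) * Polynomial.X ^ n))
          - (Polynomial.C ((((lam : ℚ) + mu : ℚ)) : QQ) * Polynomial.X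
              - Polynomial.C (aa * ((lam : ℚ) : QQ)))
            * derivative (∑ n ∈ Finset.range (j + 1), Polynomial.C (b n) * Polynomial.X ^ n)
          + Polynomial.C ((Aval ((lam : ℤ) + mu) - Aval ((lam : ℤ) + mu - 2 * j) : ℚ) : QQ)
            * (∑ n ∈ Finset.range (j + 1), Polynomial.C (b n) * Polynomial.X ^ n)) := by ring
      _ = 0 := by rw [key, mul_zero]

end
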